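/- arXiv:1810.04300 — 2 statements merged into one kernel-verified Lean document; each statement's English description precedes it below -/
import Mathlib

section
/- Monotonicity of the Stein solution above the threshold: for all real w₁, w₂ with my ≤ w₁ < w₂, one has f_h(w₁) < f_h(w₂). -/
/-!
For `w ≥ m·y` every indicator `h(w + m·j)` in the series defining `f_h(w)` equals `1`, so
`f_h(w) = -(1 - P(A_λ ≥ y)) · Σ_j (λm)^j / ∏_{ℓ ≤ j} (w + mℓ)`. Every term of this series is
strictly decreasing in `w > 0`, and `P(A_λ ≥ y) < 1` because `y > 0` excludes the atom at `0`.
-/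

/-- `poissonTail lam y = P(A_λ ≥ y)`, the upper tail of a Poisson random variable `A_λ`
with mean `lam`.  Equivalently `P(Â_λ ≥ m·y)` for the scaled Poisson variable `Â_λ = m·A_λ`. -/
noncomputable def poissonTail (lam : ℝ) (y : ℕ) : ℝ :=
  ∑' j : ℕ, if y ≤ j then Real.exp (-lam) * lam ^ j / (Nat.factorial j) else 0

/-- The solution `f_h` of the Stein equation for the scaled Poisson distribution `Â_λ = m·A_λ`
associated with the metric function `h(w) = 1{w ≥ m·y}`:
`f_h(w) = −Σ_{j=0}^∞ (λm)^j / (∏_{ℓ=0}^j (w + mℓ)) · [h(w + mj) − P(Â_λ ≥ m·y)]`. -/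
noncomputable def fh (lam : ℝ) (m y : ℕ) (w : ℝ) : ℝ :=
  -∑' j : ℕ, (lam * m) ^ j / (∏ ℓ ∈ Finset.range (j + 1), (w + (m : ℝ) * ℓ)) *
      ((if (m : ℝ) * y ≤ w + (m : ℝ) * j then (1 : ℝ) else 0) - poissonTail lam y)

open Finset ProbabilityTheory
open scoped Nat

lemma poissonTail_lt_one {lam : ℝ} (hlam : 0 ≤ lam) {y : ℕ} (hy : 0 < y) :
    poissonTail lam y < 1 := by
  have hpmf : HasSum (fun j : ℕ => Real.exp (-lam) * lam ^ j / j !) 1 :=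
    hasSum_one_poissonMeasure ⟨lam, hlam⟩
  have hle : ∀ j : ℕ, (if y ≤ j then Real.exp (-lam) * lam ^ j / j ! else 0) ≤
      Real.exp (-lam) * lam ^ j / j ! := fun j => by
    split_ifs
    exacts [le_rfl, by positivity]
  have htail : Summable fun j : ℕ => if y ≤ j then Real.exp (-lam) * lam ^ j / j ! else 0 :=
    hpmf.summable.of_nonneg_of_le (fun j => by positivity) hle
  refine hasSum_lt hle (i := 0) ?_ htail.hasSum hpmf
  simp [Nat.not_le.2 hy]
  positivity

section SteinSeries

variable {lam c w : ℝ}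

noncomputable def steinSeries (lam c w : ℝ) : ℝ :=
  ∑' j : ℕ, (lam * c) ^ j / ∏ ℓ ∈ range (j + 1), (w + c * ℓ)

lemma mul_pow_mul_factorial_le_prod (hw : 0 ≤ w) (hc : 0 ≤ c) (j : ℕ) :
    w * (c ^ j * j !) ≤ ∏ ℓ ∈ range (j + 1), (w + c * ℓ) := by
  have hfac : c ^ j * j ! = ∏ i ∈ range j, c * (i + 1) := by
    rw [prod_mul_distrib, prod_const, card_range, ← prod_range_add_one_eq_factorial]
    push_cast
    rfl
  rw [prod_range_succ', hfac, Nat.cast_zero, mul_zero, add_zero, mul_comm w]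
  gcongr with i
  push_cast
  linarith

lemma summable_steinSeries (hlam : 0 ≤ lam) (hc : 0 < c) (hw : 0 < w) :
    Summable fun j : ℕ => (lam * c) ^ j / ∏ ℓ ∈ range (j + 1), (w + c * ℓ) := by
  refine .of_nonneg_of_le (fun j => by positivity) (fun j => ?_)
    ((Real.summable_pow_div_factorial lam).mul_right w⁻¹)
  calc (lam * c) ^ j / ∏ ℓ ∈ range (j + 1), (w + c * ℓ)
      ≤ (lam * c) ^ j / (w * (c ^ j * j !)) := by
        gcongr
        exact mul_pow_mul_factorial_le_prod hw.le hc.le j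
    _ = lam ^ j / j ! * w⁻¹ := by
        rw [mul_pow]
        field_simp

lemma steinSeries_strictAntiOn (hlam : 0 ≤ lam) (hc : 0 < c) :
    StrictAntiOn (steinSeries lam c) (Set.Ioi 0) := by
  intro w₁ (hw₁ : 0 < w₁) w₂ _ hw
  have hterm : ∀ j : ℕ, (lam * c) ^ j / ∏ ℓ ∈ range (j + 1), (w₂ + c * ℓ) ≤
      (lam * c) ^ j / ∏ ℓ ∈ range (j + 1), (w₁ + c * ℓ) := fun j => by
    gcongr
  exact Summable.tsum_lt_tsum hterm (i := 0) (by simpa using inv_strictAnti₀ hw₁ hw)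
    (summable_steinSeries hlam hc (hw₁.trans hw)) (summable_steinSeries hlam hc hw₁)

end SteinSeries

lemma fh_eq_of_le {lam : ℝ} {m y : ℕ} {w : ℝ} (hw : (m : ℝ) * y ≤ w) :
    fh lam m y w = -(steinSeries lam m w * (1 - poissonTail lam y)) := by
  rw [fh, steinSeries, ← tsum_mul_right]
  congr 1
  refine tsum_congr fun j => ?_
  rw [if_pos (le_add_of_le_of_nonneg hw (by positivity))]

/-- **Monotonicity of the Stein solution above the threshold.**
For `λ > 0`, `m, y` positive integers, and all reals `w₁, w₂` with `m·y ≤ w₁ < w₂`,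
one has `f_h(w₁) < f_h(w₂)`, where `f_h` is the Stein solution for `h(w) = 1{w ≥ m·y}`. -/
theorem fh_strictMono_above_threshold
    (lam : ℝ) (hlam : 0 < lam) (m : ℕ) (hm : 0 < m) (y : ℕ) (hy : 0 < y) :
    ∀ w₁ w₂ : ℝ, (m : ℝ) * y ≤ w₁ → w₁ < w₂ → fh lam m y w₁ < fh lam m y w₂ := by
  intro w₁ w₂ hw₁ hw
  have hw₁_pos : 0 < w₁ := lt_of_lt_of_le (by positivity) hw₁
  have htail : 0 < 1 - poissonTail lam y := sub_pos.2 (poissonTail_lt_one hlam.le hy)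
  have hseries := steinSeries_strictAntiOn hlam.le (Nat.cast_pos.2 hm) hw₁_pos
    (Set.mem_Ioi.2 (hw₁_pos.trans hw)) hw
  rw [fh_eq_of_le hw₁, fh_eq_of_le (hw₁.trans hw.le)]
  exact neg_lt_neg (mul_lt_mul_of_pos_right hseries htail)
end

section
/- Bound on g_m below the threshold: for every real w with m ≤ w < my, g_m(w) ≤ 1/(λm) + (e^λ · (⌊w/m⌋ − 1)! / (m·λ^{⌊w/m⌋})) · |w − λm|/(λm). -/
/-- `g_l(w) := (f_h(w) − f_h(w + l)) / P(Â_λ ≥ m·y)` for real `w > 0`. -/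
noncomputable def gl (lam : ℝ) (m y l : ℕ) (w : ℝ) : ℝ :=
  (fh lam m y w - fh lam m y (w + l)) / poissonTail lam y

/-- `g_l` with the convention `g_l(0) := 0`. -/
noncomputable def glc (lam : ℝ) (m y l : ℕ) (w : ℝ) : ℝ :=
  if w = 0 then 0 else gl lam m y l w

open Finset

lemma Real.hasSum_pow_div_factorial (x : ℝ) :
    HasSum (fun n : ℕ => x ^ n / n.factorial) (Real.exp x) := by
  simpa [Real.exp_eq_exp_ℝ] using NormedSpace.expSeries_div_hasSum_exp x

lemma summable_ite_pow_div_factorial (lam : ℝ) (y : ℕ) :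
    Summable fun i : ℕ => if y ≤ i then lam ^ i / i.factorial else 0 := by
  refine ((Real.summable_pow_div_factorial lam).indicator {i | y ≤ i}).congr fun i => ?_
  simp [Set.indicator_apply]

lemma exp_mul_poissonTail (lam : ℝ) (y : ℕ) :
    Real.exp lam * poissonTail lam y =
      ∑' i : ℕ, if y ≤ i then lam ^ i / i.factorial else 0 := by
  rw [poissonTail, ← tsum_mul_left]
  congr 1 with i
  split_ifs
  · rw [mul_div_assoc, ← mul_assoc, ← Real.exp_add, add_neg_cancel, Real.exp_zero, one_mul]
  · rw [mul_zero]

lemma poissonTail_pos {lam : ℝ} (hlam : 0 < lam) (y : ℕ) : 0 < poissonTail lam y := by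
  have h := (summable_ite_pow_div_factorial lam y).tsum_pos (fun i => by positivity) y
    (by simp only [le_refl, if_true]; positivity)
  rw [← exp_mul_poissonTail] at h
  exact pos_of_mul_pos_right h (Real.exp_pos lam).le

lemma pow_mul_ascFactorial_le_prod {c w : ℝ} (hc : 0 ≤ c) {k : ℕ} (hk : c * (k + 1) ≤ w)
    (n : ℕ) :
    c ^ n * (k + 1).ascFactorial n ≤ ∏ ℓ ∈ range n, (w + c * ℓ) := by
  rw [Nat.ascFactorial_eq_prod_range, Nat.cast_prod, ← card_range n, ← prod_const,
    card_range, ← prod_mul_distrib]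
  refine prod_le_prod (fun ℓ _ => by positivity) fun ℓ _ => ?_
  push_cast
  nlinarith

section SteinSeries

variable {lam w : ℝ} {m y k : ℕ}

noncomputable def steinWeight (lam : ℝ) (m : ℕ) (w : ℝ) (j : ℕ) : ℝ :=
  (lam * m) ^ j / ∏ ℓ ∈ range (j + 1), (w + (m : ℝ) * ℓ)

noncomputable def thresholdIndicator (m y : ℕ) (w : ℝ) (j : ℕ) : ℝ :=
  if (m : ℝ) * y ≤ w + (m : ℝ) * j then 1 else 0

noncomputable def steinTerm (lam : ℝ) (m y : ℕ) (w : ℝ) (j : ℕ) : ℝ :=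
  steinWeight lam m w j * (thresholdIndicator m y w j - poissonTail lam y)

lemma fh_eq_neg_tsum_steinTerm : fh lam m y w = -∑' j, steinTerm lam m y w j := rfl

lemma steinWeight_nonneg (hlam : 0 ≤ lam) (hw : 0 ≤ w) (j : ℕ) :
    0 ≤ steinWeight lam m w j := by
  unfold steinWeight
  positivity

lemma steinWeight_add_self (hlam : lam ≠ 0) (hm : m ≠ 0) (hw : w ≠ 0) (j : ℕ) :
    steinWeight lam m (w + m) j = w / (lam * m) * steinWeight lam m w (j + 1) := by
  have hprod : ∏ ℓ ∈ range (j + 1 + 1), (w + (m : ℝ) * ℓ)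
      = (∏ ℓ ∈ range (j + 1), (w + m + (m : ℝ) * ℓ)) * w := by
    rw [prod_range_succ']
    push_cast
    simp only [mul_add, mul_one, add_assoc, add_comm (m : ℝ), mul_zero, add_zero]
  unfold steinWeight
  rw [hprod, pow_succ]
  field_simp

lemma steinWeight_le (hlam : 0 < lam) (hm : 0 < m) (hk : (m : ℝ) * (k + 1) ≤ w) (j : ℕ) :
    steinWeight lam m w j ≤
      k.factorial / (m * lam ^ (k + 1)) * (lam ^ (k + 1 + j) / (k + 1 + j).factorial) := by
  have hm' : (0 : ℝ) < m := by exact_mod_cast hm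
  have hfact : ((k + 1 + j).factorial : ℝ) = k.factorial * (k + 1).ascFactorial (j + 1) := by
    rw [← Nat.cast_mul, Nat.factorial_mul_ascFactorial, add_right_comm, add_assoc]
  have hprod := pow_mul_ascFactorial_le_prod hm'.le hk (j + 1)
  calc steinWeight lam m w j
      ≤ (lam * m) ^ j / (m ^ (j + 1) * (k + 1).ascFactorial (j + 1)) := by
        unfold steinWeight
        gcongr
    _ = k.factorial / (m * lam ^ (k + 1)) * (lam ^ (k + 1 + j) / (k + 1 + j).factorial) := by
        rw [hfact, pow_add lam (k + 1)]
        field_simp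
        ring

lemma summable_steinWeight (hlam : 0 < lam) (hm : 0 < m) (hk : (m : ℝ) * (k + 1) ≤ w) :
    Summable (steinWeight lam m w) :=
  have hw : 0 ≤ w := le_trans (by positivity) hk
  .of_nonneg_of_le (steinWeight_nonneg hlam.le hw) (steinWeight_le hlam hm hk)
    (((Real.summable_pow_div_factorial lam).comp_injective (add_right_injective _)).mul_left _)

lemma tsum_steinWeight_le (hlam : 0 < lam) (hm : 0 < m) (hk : (m : ℝ) * (k + 1) ≤ w) :
    ∑' j, steinWeight lam m w j ≤ Real.exp lam * (k.factorial / (m * lam ^ (k + 1))) := by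
  set C : ℝ := k.factorial / (m * lam ^ (k + 1))
  have hsum := (Real.summable_pow_div_factorial lam).comp_injective (add_right_injective (k + 1))
  calc ∑' j, steinWeight lam m w j
      ≤ ∑' j, C * (lam ^ (k + 1 + j) / (k + 1 + j).factorial) :=
        (summable_steinWeight hlam hm hk).tsum_le_tsum (steinWeight_le hlam hm hk) (hsum.mul_left C)
    _ = C * ∑' j, lam ^ (k + 1 + j) / (k + 1 + j).factorial := tsum_mul_left
    _ ≤ C * Real.exp lam := by
        gcongr
        rw [← (Real.hasSum_pow_div_factorial lam).tsum_eq]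
        exact tsum_comp_le_tsum_of_inj (Real.summable_pow_div_factorial lam)
          (fun i => by positivity) (add_right_injective (k + 1))
    _ = Real.exp lam * C := mul_comm _ _

lemma thresholdIndicator_nonneg (j : ℕ) : 0 ≤ thresholdIndicator m y w j := by
  unfold thresholdIndicator; split_ifs <;> norm_num

lemma thresholdIndicator_le_one (j : ℕ) : thresholdIndicator m y w j ≤ 1 := by
  unfold thresholdIndicator; split_ifs <;> norm_num

lemma thresholdIndicator_add_self (j : ℕ) :
    thresholdIndicator m y (w + m) j = thresholdIndicator m y w (j + 1) := by
  unfold thresholdIndicator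
  push_cast
  rw [add_assoc, mul_add_one, add_comm (m : ℝ)]

lemma summable_steinWeight_mul_thresholdIndicator (hlam : 0 < lam) (hm : 0 < m)
    (hk : (m : ℝ) * (k + 1) ≤ w) :
    Summable fun j => steinWeight lam m w j * thresholdIndicator m y w j :=
  have hW := steinWeight_nonneg (m := m) hlam.le (le_trans (by positivity) hk)
  .of_nonneg_of_le (fun j => mul_nonneg (hW j) (thresholdIndicator_nonneg j))
    (fun j => mul_le_of_le_one_right (hW j) (thresholdIndicator_le_one j))
    (summable_steinWeight hlam hm hk)

lemma steinWeight_mul_thresholdIndicator_le (hlam : 0 < lam) (hm : 0 < m)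
    (hk : (m : ℝ) * (k + 1) ≤ w) (hwk : w < m * (k + 2)) (j : ℕ) :
    steinWeight lam m w j * thresholdIndicator m y w j ≤ k.factorial / (m * lam ^ (k + 1)) *
      (if y ≤ k + 1 + j then lam ^ (k + 1 + j) / (k + 1 + j).factorial else 0) := by
  unfold thresholdIndicator
  split_ifs with hreach hy hy
  · rw [mul_one]
    exact steinWeight_le hlam hm hk j
  · -- `m y ≤ w + m j < m (k + 2 + j)` forces `y ≤ k + 1 + j`
    have hy' : ((k + 1 + j + 1 : ℕ) : ℝ) ≤ y := by exact_mod_cast Nat.lt_of_not_le hy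
    have hm' : (0 : ℝ) < m := by exact_mod_cast hm
    push_cast at hy'
    nlinarith
  · rw [mul_zero]
    positivity
  · simp

lemma tsum_steinWeight_mul_thresholdIndicator_le (hlam : 0 < lam) (hm : 0 < m)
    (hk : (m : ℝ) * (k + 1) ≤ w) (hwk : w < m * (k + 2)) :
    ∑' j, steinWeight lam m w j * thresholdIndicator m y w j ≤
      Real.exp lam * (k.factorial / (m * lam ^ (k + 1))) * poissonTail lam y := by
  set C : ℝ := k.factorial / (m * lam ^ (k + 1))
  set a : ℕ → ℝ := fun i => if y ≤ i then lam ^ i / i.factorial else 0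
  have ha : Summable a := summable_ite_pow_div_factorial lam y
  calc ∑' j, steinWeight lam m w j * thresholdIndicator m y w j
      ≤ ∑' j, C * a (k + 1 + j) :=
        (summable_steinWeight_mul_thresholdIndicator hlam hm hk).tsum_le_tsum
          (steinWeight_mul_thresholdIndicator_le hlam hm hk hwk)
          ((ha.comp_injective (add_right_injective (k + 1))).mul_left C)
    _ = C * ∑' j, a (k + 1 + j) := tsum_mul_left
    _ ≤ C * ∑' i, a i :=
        mul_le_mul_of_nonneg_left
          (tsum_comp_le_tsum_of_inj ha (fun i => by positivity) (add_right_injective (k + 1)))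
          (by positivity)
    _ = Real.exp lam * C * poissonTail lam y := by
        rw [mul_assoc, ← exp_mul_poissonTail]
        ring

lemma summable_steinTerm (hlam : 0 < lam) (hm : 0 < m) (hk : (m : ℝ) * (k + 1) ≤ w) :
    Summable (steinTerm lam m y w) :=
  ((summable_steinWeight_mul_thresholdIndicator hlam hm hk).sub
    ((summable_steinWeight hlam hm hk).mul_right (poissonTail lam y))).congr
      fun _ => (mul_sub _ _ _).symm

lemma abs_tsum_steinTerm_le (hlam : 0 < lam) (hm : 0 < m)
    (hk : (m : ℝ) * (k + 1) ≤ w) (hwk : w < m * (k + 2)) :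
    |∑' j, steinTerm lam m y w j| ≤
      Real.exp lam * (k.factorial / (m * lam ^ (k + 1))) * poissonTail lam y := by
  have hw : 0 ≤ w := le_trans (by positivity) hk
  have hP := (poissonTail_pos hlam y).le
  have hsplit : ∑' j, steinTerm lam m y w j = ∑' j, steinWeight lam m w j *
      thresholdIndicator m y w j - (∑' j, steinWeight lam m w j) * poissonTail lam y := by
    simp only [steinTerm, mul_sub]
    rw [(summable_steinWeight_mul_thresholdIndicator hlam hm hk).tsum_sub
      ((summable_steinWeight hlam hm hk).mul_right _), tsum_mul_right]
  rw [hsplit]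
  refine abs_sub_le_of_nonneg_of_le
    (tsum_nonneg fun j =>
      mul_nonneg (steinWeight_nonneg hlam.le hw j) (thresholdIndicator_nonneg j))
    (tsum_steinWeight_mul_thresholdIndicator_le hlam hm hk hwk)
    (mul_nonneg (tsum_nonneg (steinWeight_nonneg hlam.le hw)) hP) ?_
  gcongr
  exact tsum_steinWeight_le hlam hm hk

lemma steinTerm_zero (hwy : w < m * y) :
    steinTerm lam m y w 0 = -poissonTail lam y / w := by
  simp [steinTerm, steinWeight, thresholdIndicator, not_le.2 hwy, div_eq_inv_mul]

lemma tsum_steinTerm_add_self (hlam : lam ≠ 0) (hm : m ≠ 0) (hw : w ≠ 0) (hwy : w < m * y)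
    (hs : Summable (steinTerm lam m y w)) :
    ∑' j, steinTerm lam m y (w + m) j =
      w / (lam * m) * ∑' j, steinTerm lam m y w j + poissonTail lam y / (lam * m) := by
  have hshift (j : ℕ) :
      steinTerm lam m y (w + m) j = w / (lam * m) * steinTerm lam m y w (j + 1) := by
    rw [steinTerm, steinTerm, steinWeight_add_self hlam hm hw, thresholdIndicator_add_self,
      mul_assoc]
  rw [tsum_congr hshift, tsum_mul_left, hs.tsum_eq_zero_add, steinTerm_zero hwy]
  field_simp
  ring

lemma gl_self_eq (hlam : lam ≠ 0) (hm : m ≠ 0) (hw : w ≠ 0) (hwy : w < m * y)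
    (hs : Summable (steinTerm lam m y w)) (hP : poissonTail lam y ≠ 0) :
    gl lam m y m w =
      1 / (lam * m) +
        (w - lam * m) / (lam * m) * ((∑' j, steinTerm lam m y w j) / poissonTail lam y) := by
  rw [gl, fh_eq_neg_tsum_steinTerm, fh_eq_neg_tsum_steinTerm,
    tsum_steinTerm_add_self hlam hm hw hwy hs]
  field_simp
  ring

end SteinSeries

lemma exists_floor_div_eq_succ {c w : ℝ} (hc : 0 < c) (hcw : c ≤ w) :
    ∃ k : ℕ, ⌊w / c⌋₊ = k + 1 ∧ c * (k + 1) ≤ w ∧ w < c * (k + 2) := by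
  have hpos : 1 ≤ ⌊w / c⌋₊ := Nat.le_floor (by rwa [Nat.cast_one, one_le_div hc])
  have hfloor : ⌊w / c⌋₊ = ⌊w / c⌋₊ - 1 + 1 := (Nat.sub_add_cancel hpos).symm
  refine ⟨⌊w / c⌋₊ - 1, hfloor, ?_⟩
  obtain ⟨hlo, hhi⟩ := (Nat.floor_eq_iff (div_pos (hc.trans_le hcw) hc).le).1 hfloor
  rw [le_div_iff₀ hc] at hlo
  rw [div_lt_iff₀ hc] at hhi
  push_cast at hlo hhi
  constructor <;> linarith

theorem gm_bound_below_threshold_general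
    (lam : ℝ) (hlam : 0 < lam) (m : ℕ) (hm : 0 < m) (y : ℕ) :
    ∀ w : ℝ, (m : ℝ) ≤ w → w < (m : ℝ) * y →
      gl lam m y m w ≤
        1 / (lam * m) +
          Real.exp lam * (Nat.factorial (⌊w / m⌋₊ - 1)) / ((m : ℝ) * lam ^ (⌊w / m⌋₊)) *
            (|w - lam * m| / (lam * m)) := by
  intro w hmw hwy
  have hm' : (0 : ℝ) < m := by exact_mod_cast hm
  have hw : 0 < w := hm'.trans_le hmw
  have hlm : 0 < lam * m := by positivity
  have hP := poissonTail_pos hlam y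
  obtain ⟨k, hfloor, hk, hwk⟩ := exists_floor_div_eq_succ hm' hmw
  have hS := abs_tsum_steinTerm_le (y := y) hlam hm hk hwk
  rw [gl_self_eq hlam.ne' hm.ne' hw.ne' hwy (summable_steinTerm hlam hm hk) hP.ne', hfloor,
    Nat.add_sub_cancel]
  set S := ∑' j, steinTerm lam m y w j
  gcongr 1 / (lam * m) + ?_
  calc (w - lam * m) / (lam * m) * (S / poissonTail lam y)
      ≤ |w - lam * m| / (lam * m) * (|S| / poissonTail lam y) :=
        (le_abs_self _).trans_eq (by rw [abs_mul, abs_div, abs_div, abs_of_pos hlm, abs_of_pos hP])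
    _ ≤ |w - lam * m| / (lam * m) * (Real.exp lam * (k.factorial / (m * lam ^ (k + 1)))) := by
        gcongr
        rwa [div_le_iff₀ hP]
    _ = _ := by ring

/-- **Bound on `g_m` below the threshold.**
For `λ > 0`, positive integers `m, y`, and every real `w` with `m ≤ w < m·y`,
`g_m(w) ≤ 1/(λm) + (e^λ · (⌊w/m⌋ − 1)! / (m·λ^{⌊w/m⌋})) · |w − λm|/(λm)`. -/
theorem gm_bound_below_threshold
    (lam : ℝ) (hlam : 0 < lam) (m : ℕ) (hm : 0 < m) (y : ℕ) (hy : 0 < y) :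
    ∀ w : ℝ, (m : ℝ) ≤ w → w < (m : ℝ) * y →
      gl lam m y m w ≤
        1 / (lam * m) +
          Real.exp lam * (Nat.factorial (⌊w / m⌋₊ - 1)) / ((m : ℝ) * lam ^ (⌊w / m⌋₊)) *
            (|w - lam * m| / (lam * m)) :=
  gm_bound_below_threshold_general lam hlam m hm y
end
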